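/- Let d, r, g be real-valued continuous functions on [t₀,∞) with d(t) > 0. Suppose that for every T ≥ t₀ there exist T ≤ s₁ < t₁ ≤ s₂ < t₂ such that g(t) ≤ 0 for t ∈ [s₁,t₁] and g(t) ≥ 0 for t ∈ [s₂,t₂], and that for i = 1,2 there exists a continuously differentiable function u on [s_i,t_i] with u not identically zero, u(s_i) = u(t_i) = 0, and ∫_{s_i}^{t_i} (r(τ)u(τ)² − d(τ)u'(τ)²) dτ ≥ 0. Then the equation (d(t)φ')' + r(t)φ = g(t), t ≥ t₀, is oscillatory. -/

import Mathlib

/-!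
If a solution `φ` had no zeros beyond some point, it would have constant sign there; replacing
`(φ, g)` by `(-φ, -g)` we may assume `φ > 0` on an interval `[a, b]` on which `g ≤ 0`, i.e. `φ`
is a positive supersolution: `(d φ')' + r φ ≤ 0`. Integrating Picone's identity
`(u² d φ' / φ)' = d u'² - d (u' φ - u φ')² / φ² + u² (d φ')' / φ`
against a test function `u` vanishing at `a` and `b` gives
`∫ (r u² - d u'²) = ∫ u² ((d φ')' + r φ) / φ - ∫ d (u' φ - u φ')² / φ² ≤ 0`.
If the left side is nonnegative, both integrals vanish, so `u' φ - u φ' = 0`: `u / φ` is constant,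
hence `u = 0`.
-/

open MeasureTheory Real Set

/-- `φ` is a solution of the forced second order linear ordinary differential equation
`(d φ')' + r φ = g` on `[t₀, ∞)`: `φ` is continuously differentiable on `[t₀, ∞)` with
derivative `φd`, `d·φd` is continuously differentiable on `[t₀, ∞)` with derivative `Dd`,
and the equation holds everywhere on `[t₀, ∞)`. -/
def IsODESolution (t₀ : ℝ) (d r g : ℝ → ℝ) (φ : ℝ → ℝ) : Prop :=
  ∃ φd Dd : ℝ → ℝ,
    (∀ t ∈ Ici t₀, HasDerivWithinAt φ (φd t) (Ici t₀) t) ∧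
    ContinuousOn φd (Ici t₀) ∧
    (∀ t ∈ Ici t₀, HasDerivWithinAt (fun s => d s * φd s) (Dd t) (Ici t₀) t) ∧
    ContinuousOn Dd (Ici t₀) ∧
    ∀ t ∈ Ici t₀, Dd t + r t * φ t = g t

open intervalIntegral

theorem IsPreconnected.forall_pos_or_forall_neg {α β : Type*} [TopologicalSpace α]
    [LinearOrder β] [TopologicalSpace β] [OrderClosedTopology β] [Zero β] {S : Set α}
    {f : α → β} (hS : IsPreconnected S) (hf : ContinuousOn f S) (hne : ∀ x ∈ S, f x ≠ 0) :
    (∀ x ∈ S, 0 < f x) ∨ ∀ x ∈ S, f x < 0 := by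
  by_contra! h
  obtain ⟨⟨x, hx, hfx⟩, y, hy, hfy⟩ := h
  obtain ⟨z, hz, hfz⟩ := hS.intermediate_value hx hy hf ⟨hfx, hfy⟩
  exact hne z hz hfz

theorem eqOn_zero_of_integral_eq_zero {F : ℝ → ℝ} {a b : ℝ} (hab : a ≤ b)
    (hF : ContinuousOn F (Icc a b)) (hF₀ : ∀ t ∈ Icc a b, 0 ≤ F t)
    (hint : ∫ t in a..b, F t = 0) : EqOn F 0 (Ioo a b) := by
  have hae : F =ᵐ[volume.restrict (Ioc a b)] 0 := by
    refine (integral_eq_zero_iff_of_le_of_nonneg_ae hab ?_ (hF.intervalIntegrable_of_Icc hab)).1 hint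
    exact ae_restrict_of_forall_mem measurableSet_Ioc fun t ht => hF₀ t (Ioc_subset_Icc_self ht)
  exact Measure.eqOn_open_of_ae_eq (ae_restrict_of_ae_restrict_of_subset Ioo_subset_Ioc_self hae)
    isOpen_Ioo (hF.mono Ioo_subset_Icc_self) continuousOn_const

section Picone

variable {a b : ℝ} {d r φ φd Dd u ud : ℝ → ℝ}

theorem eqOn_zero_of_wronskian_eq_zero
    (hu : ∀ t ∈ Icc a b, HasDerivWithinAt u (ud t) (Icc a b) t)
    (hφ : ∀ t ∈ Icc a b, HasDerivWithinAt φ (φd t) (Icc a b) t)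
    (hφ₀ : ∀ t ∈ Icc a b, φ t ≠ 0) (hW : ∀ t ∈ Ioo a b, ud t * φ t - u t * φd t = 0)
    (hub : u b = 0) : EqOn u 0 (Icc a b) := by
  intro t ht
  rcases ht.2.eq_or_lt with rfl | htb
  · exact hub
  have hsub : Icc t b ⊆ Icc a b := Icc_subset_Icc_left ht.1
  have hquot : ∀ x ∈ Icc a b, HasDerivWithinAt (fun x => u x / φ x)
      ((ud x * φ x - u x * φd x) / φ x ^ 2) (Icc a b) x :=
    fun x hx => (hu x hx).div (hφ x hx) (hφ₀ x hx)
  obtain ⟨c, -, hc⟩ := exists_hasDerivAt_eq_slope (fun x => u x / φ x) (fun _ => 0) htb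
    (fun x hx => (hquot x (hsub hx)).continuousWithinAt.mono hsub)
    fun x hx => by
      have hx' : x ∈ Ioo a b := ⟨ht.1.trans_lt hx.1, hx.2⟩
      simpa [hW x hx'] using (hquot x (Ioo_subset_Icc_self hx')).hasDerivAt
        (Icc_mem_nhds hx'.1 hx'.2)
  simpa [hub, (sub_pos.2 htb).ne', hφ₀ t ht] using hc.symm

theorem hasDerivWithinAt_picone {s : Set ℝ} {t : ℝ}
    (hu : HasDerivWithinAt u (ud t) s t) (hφ : HasDerivWithinAt φ (φd t) s t)
    (hP : HasDerivWithinAt (fun x => d x * φd x) (Dd t) s t) (hφ₀ : φ t ≠ 0) :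
    HasDerivWithinAt (fun x => u x ^ 2 * (d x * φd x) / φ x)
      (d t * ud t ^ 2 - d t * (ud t * φ t - u t * φd t) ^ 2 / φ t ^ 2 + u t ^ 2 * Dd t / φ t)
      s t := by
  refine (((hu.fun_pow 2).fun_mul hP).fun_div hφ hφ₀).congr_deriv ?_
  field_simp
  ring

theorem integral_picone (hab : a ≤ b) (hd : ContinuousOn d (Icc a b))
    (hr : ContinuousOn r (Icc a b))
    (hφ : ∀ t ∈ Icc a b, HasDerivWithinAt φ (φd t) (Icc a b) t) (hφd : ContinuousOn φd (Icc a b))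
    (hP : ∀ t ∈ Icc a b, HasDerivWithinAt (fun x => d x * φd x) (Dd t) (Icc a b) t)
    (hDd : ContinuousOn Dd (Icc a b)) (hφ₀ : ∀ t ∈ Icc a b, φ t ≠ 0)
    (hu : ∀ t ∈ Icc a b, HasDerivWithinAt u (ud t) (Icc a b) t) (hud : ContinuousOn ud (Icc a b))
    (hua : u a = 0) (hub : u b = 0) :
    ∫ t in a..b, (d t * (ud t * φ t - u t * φd t) ^ 2 / φ t ^ 2
        + u t ^ 2 * -(Dd t + r t * φ t) / φ t) =
      -∫ t in a..b, (r t * u t ^ 2 - d t * ud t ^ 2) := by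
  have hφc : ContinuousOn φ (Icc a b) := fun t ht => (hφ t ht).continuousWithinAt
  have huc : ContinuousOn u (Icc a b) := fun t ht => (hu t ht).continuousWithinAt
  have hφ₀' : ∀ t ∈ Icc a b, φ t ^ 2 ≠ 0 := fun t ht => pow_ne_zero 2 (hφ₀ t ht)
  have hw := fun t ht => hasDerivWithinAt_picone (hu t ht) (hφ t ht) (hP t ht) (hφ₀ t ht)
  have hw' : IntervalIntegrable (fun t => d t * ud t ^ 2
      - d t * (ud t * φ t - u t * φd t) ^ 2 / φ t ^ 2 + u t ^ 2 * Dd t / φ t) volume a b :=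
    ContinuousOn.intervalIntegrable_of_Icc hab (by fun_prop (disch := assumption))
  have hQ : IntervalIntegrable (fun t => -(r t * u t ^ 2 - d t * ud t ^ 2)) volume a b :=
    ContinuousOn.intervalIntegrable_of_Icc hab (by fun_prop)
  have hw'₀ := integral_eq_sub_of_hasDeriv_right_of_le hab
    (fun t ht => (hw t ht).continuousWithinAt)
    (fun t ht => ((hw t (Ioo_subset_Icc_self ht)).hasDerivAt
      (Icc_mem_nhds ht.1 ht.2)).hasDerivWithinAt) hw'
  calc _ = ∫ t in a..b, (-(r t * u t ^ 2 - d t * ud t ^ 2) - (d t * ud t ^ 2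
        - d t * (ud t * φ t - u t * φd t) ^ 2 / φ t ^ 2 + u t ^ 2 * Dd t / φ t)) :=
        integral_congr fun t ht => by
          rw [uIcc_of_le hab] at ht
          field_simp [hφ₀ t ht]
          ring
    _ = _ := by
      rw [integral_sub hQ hw', intervalIntegral.integral_neg, hw'₀, hua, hub]
      simp

theorem eqOn_zero_of_pos_supersolution (hab : a < b) (hd : ContinuousOn d (Icc a b))
    (hr : ContinuousOn r (Icc a b)) (hd₀ : ∀ t ∈ Icc a b, 0 < d t)
    (hφ : ∀ t ∈ Icc a b, HasDerivWithinAt φ (φd t) (Icc a b) t) (hφd : ContinuousOn φd (Icc a b))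
    (hP : ∀ t ∈ Icc a b, HasDerivWithinAt (fun x => d x * φd x) (Dd t) (Icc a b) t)
    (hDd : ContinuousOn Dd (Icc a b)) (hφ₀ : ∀ t ∈ Icc a b, 0 < φ t)
    (hsuper : ∀ t ∈ Icc a b, Dd t + r t * φ t ≤ 0)
    (hu : ∀ t ∈ Icc a b, HasDerivWithinAt u (ud t) (Icc a b) t) (hud : ContinuousOn ud (Icc a b))
    (hua : u a = 0) (hub : u b = 0)
    (hQ : 0 ≤ ∫ t in a..b, (r t * u t ^ 2 - d t * ud t ^ 2)) :
    EqOn u 0 (Icc a b) := by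
  have hφc : ContinuousOn φ (Icc a b) := fun t ht => (hφ t ht).continuousWithinAt
  have huc : ContinuousOn u (Icc a b) := fun t ht => (hu t ht).continuousWithinAt
  have hφne : ∀ t ∈ Icc a b, φ t ≠ 0 := fun t ht => (hφ₀ t ht).ne'
  have hφne' : ∀ t ∈ Icc a b, φ t ^ 2 ≠ 0 := fun t ht => pow_ne_zero 2 (hφne t ht)
  have hF : ContinuousOn (fun t => d t * (ud t * φ t - u t * φd t) ^ 2 / φ t ^ 2) (Icc a b) := by
    fun_prop (disch := assumption)
  have hG : ContinuousOn (fun t => u t ^ 2 * -(Dd t + r t * φ t) / φ t) (Icc a b) := by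
    fun_prop (disch := assumption)
  have hF₀ : ∀ t ∈ Icc a b, 0 ≤ d t * (ud t * φ t - u t * φd t) ^ 2 / φ t ^ 2 :=
    fun t ht => by have := hd₀ t ht; positivity
  have hG₀ : ∀ t ∈ Icc a b, 0 ≤ u t ^ 2 * -(Dd t + r t * φ t) / φ t := fun t ht =>
    div_nonneg (mul_nonneg (sq_nonneg _) (neg_nonneg.2 (hsuper t ht))) (hφ₀ t ht).le
  have hFint : ∫ t in a..b, d t * (ud t * φ t - u t * φd t) ^ 2 / φ t ^ 2 = 0 := by
    have hpicone := integral_picone hab.le hd hr hφ hφd hP hDd hφne hu hud hua hub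
    rw [integral_add (hF.intervalIntegrable_of_Icc hab.le) (hG.intervalIntegrable_of_Icc hab.le)]
      at hpicone
    linarith [integral_nonneg (μ := volume) hab.le hF₀, integral_nonneg (μ := volume) hab.le hG₀]
  refine eqOn_zero_of_wronskian_eq_zero hu hφ hφne (fun t ht => ?_) hub
  have ht' := Ioo_subset_Icc_self ht
  simpa [(hd₀ t ht').ne', hφne t ht'] using eqOn_zero_of_integral_eq_zero hab.le hF hF₀ hFint ht

end Picone

theorem IsODESolution.continuousOn {t₀ : ℝ} {d r g φ : ℝ → ℝ} (h : IsODESolution t₀ d r g φ) :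
    ContinuousOn φ (Ici t₀) := by
  obtain ⟨φd, -, hφ, -⟩ := h
  exact fun t ht => (hφ t ht).continuousWithinAt

theorem IsODESolution.neg {t₀ : ℝ} {d r g φ : ℝ → ℝ} (h : IsODESolution t₀ d r g φ) :
    IsODESolution t₀ d r (-g) (-φ) := by
  obtain ⟨φd, Dd, hφ, hφd, hP, hDd, heq⟩ := h
  refine ⟨-φd, -Dd, fun t ht => (hφ t ht).neg, hφd.neg, fun t ht => ?_, hDd.neg, fun t ht => ?_⟩
  · simpa only [Pi.neg_apply, mul_neg] using (hP t ht).fun_neg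
  · simp only [Pi.neg_apply]
    linarith [heq t ht]

/-- The functional `u ↦ ∫ (d u'² - r u²)` on `C¹` functions vanishing at `a` and `b` is not
positive definite. -/
def NotPosDefOn (d r : ℝ → ℝ) (a b : ℝ) : Prop :=
  ∃ u ud : ℝ → ℝ,
    (∀ t ∈ Icc a b, HasDerivWithinAt u (ud t) (Icc a b) t) ∧
    ContinuousOn ud (Icc a b) ∧
    (∃ t ∈ Icc a b, u t ≠ 0) ∧ u a = 0 ∧ u b = 0 ∧
    0 ≤ ∫ τ in a..b, (r τ * u τ ^ 2 - d τ * ud τ ^ 2)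

theorem IsODESolution.exists_nonpos_of_notPosDefOn {t₀ a b : ℝ} {d r g φ : ℝ → ℝ}
    (h : IsODESolution t₀ d r g φ) (hd : ContinuousOn d (Ici t₀)) (hr : ContinuousOn r (Ici t₀))
    (hd₀ : ∀ t ∈ Ici t₀, 0 < d t) (ha : t₀ ≤ a) (hab : a < b) (hg : ∀ t ∈ Icc a b, g t ≤ 0)
    (hQ : NotPosDefOn d r a b) : ∃ t ∈ Icc a b, φ t ≤ 0 := by
  by_contra! hφ₀
  obtain ⟨φd, Dd, hφ, hφd, hP, hDd, heq⟩ := h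
  obtain ⟨u, ud, hu, hud, ⟨t, ht, hut⟩, hua, hub, hQ⟩ := hQ
  have hsub : Icc a b ⊆ Ici t₀ := fun x hx => ha.trans hx.1
  exact hut <| eqOn_zero_of_pos_supersolution hab (hd.mono hsub) (hr.mono hsub)
    (fun x hx => hd₀ x (hsub hx)) (fun x hx => (hφ x (hsub hx)).mono hsub) (hφd.mono hsub)
    (fun x hx => (hP x (hsub hx)).mono hsub) (hDd.mono hsub) hφ₀
    (fun x hx => (heq x (hsub hx)).trans_le (hg x hx)) hu hud hua hub hQ ht

theorem stmt12_general (t₀ : ℝ) (d r g : ℝ → ℝ)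
    (hd : ContinuousOn d (Ici t₀)) (hr : ContinuousOn r (Ici t₀))
    (hdpos : ∀ t ∈ Ici t₀, 0 < d t)
    (hyp : ∀ T, t₀ ≤ T → ∃ s₁ u₁ s₂ u₂ : ℝ,
      T ≤ s₁ ∧ s₁ < u₁ ∧ u₁ ≤ s₂ ∧ s₂ < u₂ ∧
      (∀ t ∈ Icc s₁ u₁, g t ≤ 0) ∧ (∀ t ∈ Icc s₂ u₂, 0 ≤ g t) ∧
      (∃ u ud : ℝ → ℝ,
        (∀ t ∈ Icc s₁ u₁, HasDerivWithinAt u (ud t) (Icc s₁ u₁) t) ∧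
        ContinuousOn ud (Icc s₁ u₁) ∧
        (∃ t ∈ Icc s₁ u₁, u t ≠ 0) ∧ u s₁ = 0 ∧ u u₁ = 0 ∧
        0 ≤ ∫ τ in s₁..u₁, (r τ * u τ ^ 2 - d τ * ud τ ^ 2)) ∧
      (∃ u ud : ℝ → ℝ,
        (∀ t ∈ Icc s₂ u₂, HasDerivWithinAt u (ud t) (Icc s₂ u₂) t) ∧
        ContinuousOn ud (Icc s₂ u₂) ∧
        (∃ t ∈ Icc s₂ u₂, u t ≠ 0) ∧ u s₂ = 0 ∧ u u₂ = 0 ∧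
        0 ≤ ∫ τ in s₂..u₂, (r τ * u τ ^ 2 - d τ * ud τ ^ 2))) :
    ∀ φ : ℝ → ℝ, IsODESolution t₀ d r g φ → ∀ T : ℝ, ∃ t, T ≤ t ∧ φ t = 0 := by
  intro φ hφ T
  by_contra! hφ₀
  have hT : t₀ ≤ max T t₀ := le_max_right T t₀
  have hsign := isPreconnected_Ici.forall_pos_or_forall_neg
    (hφ.continuousOn.mono (Ici_subset_Ici.2 hT)) fun t ht => hφ₀ t ((le_max_left T t₀).trans ht)
  obtain ⟨s₁, u₁, s₂, u₂, hs₁, hs₁u₁, hu₁s₂, hs₂u₂, hg₁, hg₂, hQ₁, hQ₂⟩ := hyp _ hT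
  rcases hsign with hpos | hneg
  · obtain ⟨t, ht, hφt⟩ := hφ.exists_nonpos_of_notPosDefOn hd hr hdpos (hT.trans hs₁) hs₁u₁ hg₁ hQ₁
    exact (hpos t (hs₁.trans ht.1)).not_ge hφt
  · have hs₂ : max T t₀ ≤ s₂ := hs₁.trans (hs₁u₁.le.trans hu₁s₂)
    obtain ⟨t, ht, hφt⟩ := hφ.neg.exists_nonpos_of_notPosDefOn hd hr hdpos (hT.trans hs₂) hs₂u₂
      (fun t ht => neg_nonpos.2 (hg₂ t ht)) hQ₂
    exact (hneg t (hs₂.trans ht.1)).not_ge (neg_nonpos.1 hφt)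

/-- Theorem 1.1 (Wong's oscillation criterion): under the stated sign conditions on the
forcing term `g` and the variational conditions with test functions `u`, every solution of
`(d φ')' + r φ = g` on `[t₀, ∞)` has arbitrarily large zeroes. -/
theorem stmt12 (t₀ : ℝ) (d r g : ℝ → ℝ)
    (hd : ContinuousOn d (Ici t₀)) (hr : ContinuousOn r (Ici t₀))
    (hg : ContinuousOn g (Ici t₀))
    (hdpos : ∀ t ∈ Ici t₀, 0 < d t)
    (hyp : ∀ T, t₀ ≤ T → ∃ s₁ u₁ s₂ u₂ : ℝ,
      T ≤ s₁ ∧ s₁ < u₁ ∧ u₁ ≤ s₂ ∧ s₂ < u₂ ∧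
      (∀ t ∈ Icc s₁ u₁, g t ≤ 0) ∧ (∀ t ∈ Icc s₂ u₂, 0 ≤ g t) ∧
      (∃ u ud : ℝ → ℝ,
        (∀ t ∈ Icc s₁ u₁, HasDerivWithinAt u (ud t) (Icc s₁ u₁) t) ∧
        ContinuousOn ud (Icc s₁ u₁) ∧
        (∃ t ∈ Icc s₁ u₁, u t ≠ 0) ∧ u s₁ = 0 ∧ u u₁ = 0 ∧
        0 ≤ ∫ τ in s₁..u₁, (r τ * u τ ^ 2 - d τ * ud τ ^ 2)) ∧
      (∃ u ud : ℝ → ℝ,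
        (∀ t ∈ Icc s₂ u₂, HasDerivWithinAt u (ud t) (Icc s₂ u₂) t) ∧
        ContinuousOn ud (Icc s₂ u₂) ∧
        (∃ t ∈ Icc s₂ u₂, u t ≠ 0) ∧ u s₂ = 0 ∧ u u₂ = 0 ∧
        0 ≤ ∫ τ in s₂..u₂, (r τ * u τ ^ 2 - d τ * ud τ ^ 2))) :
    ∀ φ : ℝ → ℝ, IsODESolution t₀ d r g φ → ∀ T : ℝ, ∃ t, T ≤ t ∧ φ t = 0 :=
  stmt12_general t₀ d r g hd hr hdpos hyp
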